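/- arXiv:2408.05535 — 3 statements merged into one kernel-verified Lean document; each statement's English description precedes it below -/
import Mathlib

section
/- Let Z be a classification matrix with no empty classes, let X ∈ ℝ^{K×K}, and let U = Z X ∈ ℝ^{N×K} satisfy U'U = I_{K×K}. Then X is invertible and X X' = (Z'Z)^{-1}, i.e., X X' is the diagonal matrix with k-th diagonal entry 1/N_k. (This is the key identity behind Lemma 1, part 2, used for both the SVD-based matrix U = ZX and the eigenvector matrix V = ZY.) -/
/-!
Since `Z` has one `1` per row, `Zᵀ * Z` is the diagonal matrix `D` of class sizes, so
`Uᵀ * U = 1` reads `Xᵀ * D * X = 1`. Square matrices over a commutative ring with a one-sided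
inverse are invertible, so `X⁻¹ = Xᵀ * D` and hence `X * Xᵀ * D = 1`, i.e. `X * Xᵀ = D⁻¹`.
-/

open Matrix Finset

namespace Matrix

variable {ι κ n R : Type*}

def classificationMatrix (R : Type*) [DecidableEq κ] [Zero R] [One R] (ℓ : ι → κ) :
    Matrix ι κ R :=
  of fun i k => if ℓ i = k then 1 else 0

theorem classificationMatrix_transpose_mul_self [Fintype ι] [DecidableEq κ] [NonAssocSemiring R]
    (ℓ : ι → κ) :
    (classificationMatrix R ℓ)ᵀ * classificationMatrix R ℓ =
      diagonal fun k => (#{i | ℓ i = k} : R) := by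
  ext k l
  rcases eq_or_ne k l with rfl | hkl
  · simp +contextual [classificationMatrix, mul_apply, Finset.sum_boole]
  · refine (Finset.sum_eq_zero fun i _ => ?_).trans (diagonal_apply_ne _ hkl).symm
    by_cases hi : ℓ i = k <;> simp [classificationMatrix, hi, hkl]

section CommRing

variable [Fintype n] [DecidableEq n] [CommRing R] {X D : Matrix n n R}

theorem mul_transpose_mul_eq_one_of_transpose_mul_mul_eq_one (h : Xᵀ * D * X = 1) :
    X * Xᵀ * D = 1 := by
  rw [Matrix.mul_assoc]
  exact mul_eq_one_comm.mp h

theorem mul_transpose_eq_inv_of_transpose_mul_mul_eq_one (h : Xᵀ * D * X = 1) :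
    X * Xᵀ = D⁻¹ :=
  (inv_eq_left_inv (mul_transpose_mul_eq_one_of_transpose_mul_mul_eq_one h)).symm

end CommRing

theorem inv_diagonal_of_isUnit [Fintype n] [DecidableEq n] [Field R] {d : n → R}
    (hd : IsUnit (diagonal d)) : (diagonal d)⁻¹ = diagonal d⁻¹ := by
  have hne : ∀ i, d i ≠ 0 := fun i => (Pi.isUnit_iff.mp (isUnit_diagonal.mp hd) i).ne_zero
  refine inv_eq_left_inv ?_
  rw [diagonal_mul_diagonal, ← diagonal_one]
  exact congrArg diagonal (funext fun i => inv_mul_cancel₀ (hne i))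

end Matrix

theorem XXt_eq_inv_ZtZ_general {N K : ℕ}
    (ℓ : Fin N → Fin K)
    (Z : Matrix (Fin N) (Fin K) ℝ)
    (hZ : ∀ i k, Z i k = if ℓ i = k then 1 else 0)
    (Nk : Fin K → ℕ)
    (hNk : ∀ k, Nk k = (Finset.univ.filter fun i => ℓ i = k).card)
    (X : Matrix (Fin K) (Fin K) ℝ)
    (U : Matrix (Fin N) (Fin K) ℝ)
    (hU : U = Z * X)
    (horth : Uᵀ * U = 1) :
    IsUnit X ∧ X * Xᵀ = (Zᵀ * Z)⁻¹ ∧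
      X * Xᵀ = Matrix.diagonal fun k => 1 / (Nk k : ℝ) := by
  have hZtZ : Zᵀ * Z = diagonal fun k => (Nk k : ℝ) := by
    rw [show Z = classificationMatrix ℝ ℓ from Matrix.ext hZ,
      classificationMatrix_transpose_mul_self]
    simp only [hNk]
  have hXtDX : Xᵀ * (Zᵀ * Z) * X = 1 := by
    simpa only [hU, transpose_mul, Matrix.mul_assoc] using horth
  have hXXt := mul_transpose_eq_inv_of_transpose_mul_mul_eq_one hXtDX
  have hD : IsUnit (Zᵀ * Z) :=
    IsUnit.of_mul_eq_one_right _ (mul_transpose_mul_eq_one_of_transpose_mul_mul_eq_one hXtDX)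
  refine ⟨IsUnit.of_mul_eq_one_right _ hXtDX, hXXt, ?_⟩
  rw [hXXt, hZtZ, inv_diagonal_of_isUnit (hZtZ ▸ hD)]
  simp only [Pi.inv_def, one_div]

/-- key identity behind Lemma 1, parts 2 and 3: if `Z` is a
classification matrix with no empty classes, `U = Z * X` and `Uᵀ * U = I`, then `X`
is invertible and `X * Xᵀ = (Zᵀ * Z)⁻¹`, the diagonal matrix with entries `1 / N_k`. -/
theorem XXt_eq_inv_ZtZ {N K : ℕ}
    (ℓ : Fin N → Fin K) (hsurj : Function.Surjective ℓ)
    (Z : Matrix (Fin N) (Fin K) ℝ)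
    (hZ : ∀ i k, Z i k = if ℓ i = k then 1 else 0)
    (Nk : Fin K → ℕ)
    (hNk : ∀ k, Nk k = (Finset.univ.filter fun i => ℓ i = k).card)
    (X : Matrix (Fin K) (Fin K) ℝ)
    (U : Matrix (Fin N) (Fin K) ℝ)
    (hU : U = Z * X)
    (horth : Uᵀ * U = 1) :
    IsUnit X ∧ X * Xᵀ = (Zᵀ * Z)⁻¹ ∧
      X * Xᵀ = Matrix.diagonal fun k => 1 / (Nk k : ℝ) :=
  XXt_eq_inv_ZtZ_general ℓ Z hZ Nk hNk X U hU horth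
end

section
/- Let Z be a classification matrix with no empty classes, let X ∈ ℝ^{K×K}, and let U = Z X satisfy U'U = I_{K×K}. Then for all k, k̃ ∈ [K] with k ≠ k̃, the Euclidean distance between the k-th and k̃-th rows of X equals √(1/N_k + 1/N_{k̃}), i.e., ‖X(k,:) − X(k̃,:)‖_F = √(1/N_k + 1/N_{k̃}). (Equation (3)/(4) of Lemma 1.) -/
/-!
Since `U = Z X`, the orthogonality `U'U = I` reads `X' (Z'Z) X = I`, and `Z'Z = diag(N_k)`.
A one-sided inverse of a square matrix is two-sided, so `X X' = diag(1/N_k)`: the rows of `X`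
are pairwise orthogonal with squared norms `1/N_k`, and the squared distance of two rows is
`1/N_k + 1/N_k̃` by expanding the square.
-/

open Matrix Finset

lemma transpose_mul_self_eq_diagonal_card_fiber {ι κ R : Type*} [Fintype ι] [DecidableEq κ]
    [Semiring R] (ℓ : ι → κ) {Z : Matrix ι κ R} (hZ : ∀ i k, Z i k = if ℓ i = k then 1 else 0) :
    Zᵀ * Z = diagonal fun k => (#{i | ℓ i = k} : R) := by
  ext a b
  simp only [mul_apply, transpose_apply, hZ, ite_zero_mul_ite_zero, mul_one, diagonal_apply]
  split_ifs with hab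
  · simp only [hab, and_self, sum_boole]
  · exact sum_eq_zero fun i _ => if_neg fun ⟨ha, hb⟩ => hab (ha ▸ hb)

lemma mul_transpose_eq_diagonal_inv {κ K : Type*} [Fintype κ] [DecidableEq κ] [Field K]
    {X : Matrix κ κ K} {d : κ → K} (hd : ∀ k, d k ≠ 0) (h : Xᵀ * diagonal d * X = 1) :
    X * Xᵀ = diagonal fun k => (d k)⁻¹ := by
  have hright : X * Xᵀ * diagonal d = 1 := by
    rw [Matrix.mul_assoc]
    exact mul_eq_one_comm.mp h
  ext a b
  have hentry := congr_fun₂ hright a b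
  rw [mul_diagonal, one_apply] at hentry
  rw [diagonal_apply, (eq_mul_inv_iff_mul_eq₀ (hd b)).mpr hentry]
  split_ifs with hab <;> simp [hab]

lemma sum_sq_sub_rows_eq {κ m R : Type*} [Fintype m] [CommRing R] (X : Matrix κ m R)
    (k k' : κ) :
    ∑ j, (X k j - X k' j) ^ 2 = (X * Xᵀ) k k - 2 * (X * Xᵀ) k k' + (X * Xᵀ) k' k' := by
  simp only [mul_apply, transpose_apply, mul_sum, ← sum_add_distrib, ← sum_sub_distrib]
  exact sum_congr rfl fun j _ => by ring

/-- Equations (3)/(4) of Lemma 1: if `Z` is a classification matrix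
with no empty classes, `U = Z * X` and `Uᵀ * U = I`, then for `k ≠ k₂` the Euclidean
distance between the `k`-th and `k₂`-th rows of `X` is `√(1/N_k + 1/N_k₂)`. -/
theorem row_distance_of_X {N K : ℕ}
    (ℓ : Fin N → Fin K) (hsurj : Function.Surjective ℓ)
    (Z : Matrix (Fin N) (Fin K) ℝ)
    (hZ : ∀ i k, Z i k = if ℓ i = k then 1 else 0)
    (Nk : Fin K → ℕ)
    (hNk : ∀ k, Nk k = (Finset.univ.filter fun i => ℓ i = k).card)
    (X : Matrix (Fin K) (Fin K) ℝ)
    (U : Matrix (Fin N) (Fin K) ℝ)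
    (hU : U = Z * X)
    (horth : Uᵀ * U = 1) :
    ∀ k k₂ : Fin K, k ≠ k₂ →
      Real.sqrt (∑ j, (X k j - X k₂ j) ^ 2) =
        Real.sqrt (1 / (Nk k : ℝ) + 1 / (Nk k₂ : ℝ)) := by
  intro k k₂ hk
  have hNk_ne : ∀ k, (Nk k : ℝ) ≠ 0 := fun k => by
    obtain ⟨i, rfl⟩ := hsurj k
    rw [hNk, Nat.cast_ne_zero, ← Nat.pos_iff_ne_zero, card_pos]
    exact ⟨i, by simp⟩
  have hZZ : Zᵀ * Z = diagonal fun k => (Nk k : ℝ) := by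
    simpa only [hNk] using transpose_mul_self_eq_diagonal_card_fiber ℓ hZ
  have hXXt : X * Xᵀ = diagonal fun k => (Nk k : ℝ)⁻¹ := by
    refine mul_transpose_eq_diagonal_inv hNk_ne ?_
    rw [← hZZ]
    simpa only [hU, transpose_mul, Matrix.mul_assoc] using horth
  rw [sum_sq_sub_rows_eq, hXXt, diagonal_apply_eq, diagonal_apply_eq, diagonal_apply_ne _ hk]
  congr 1
  ring
end

section
/- Let Z be a classification matrix with no empty classes, let μ ≥ 0, and let A ∈ ℝ^{J×K} satisfy ‖A w‖² ≥ μ ‖w‖² for all w ∈ ℝ^K. Then for every v ∈ ℝ^K, ‖A (Z'Z) v‖² ≥ N_min · μ · ‖Z v‖², where N_min = min_{k∈[K]} N_k. Since the column space of Z has dimension K, this implies that the K-th largest singular value of Z A' satisfies σ_K(Z A') ≥ √(N_min · μ). (This is Equation (Reig) in the proof of Theorem 1: σ_K(𝓡_sum) ≥ ρ √(N_min) σ_K(∑_{l∈[L]} B_l), where 𝓡_sum = ρ Z (∑_{l∈[L]} B_l)'.) -/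
/-!
`ZᵀZ` is diagonal with entries `N_k ≥ N_min`, so `‖Z x‖² = ∑ N_k x_k² ≥ N_min ‖x‖²`; applied to
`x = (ZᵀZ) v` and combined with `‖A w‖² ≥ μ ‖w‖²` this gives the first inequality. For the
singular value, test the max–min characterization on the `K`-dimensional range of `A` (`A` is
injective when `μ > 0`): there Cauchy–Schwarz gives `‖Aᵀ v‖² ≥ μ ‖v‖²`, hence
`‖Z Aᵀ v‖² ≥ N_min μ ‖v‖²`.
-/

open Matrix Finset

/-- The `k`-th largest singular value of a matrix, via the Courant–Fischer max–min
characterization: the supremum of all `c ≥ 0` such that `‖A v‖ ≥ c ‖v‖` on some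
`k`-dimensional subspace. -/
noncomputable def kthSingularValue {n m : ℕ} (A : Matrix (Fin n) (Fin m) ℝ) (k : ℕ) : ℝ :=
  sSup {c : ℝ | 0 ≤ c ∧ ∃ W : Submodule ℝ (Fin m → ℝ), Module.finrank ℝ W = k ∧
    ∀ v ∈ W, c * Real.sqrt (∑ j, v j ^ 2) ≤ Real.sqrt (∑ i, (A.mulVec v) i ^ 2)}

theorem sum_sq_eq_zero_iff {ι : Type*} [Fintype ι] {v : ι → ℝ} : ∑ i, v i ^ 2 = 0 ↔ v = 0 := by
  simpa [dotProduct, sq] using dotProduct_self_eq_zero (v := v)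

section KthSingularValue

variable {n m : ℕ} (M : Matrix (Fin n) (Fin m) ℝ)

theorem kthSingularValue_nonneg (k : ℕ) : 0 ≤ kthSingularValue M k :=
  Real.sSup_nonneg fun _ hc => hc.1

theorem sum_mulVec_sq_le_frobenius_mul (v : Fin m → ℝ) :
    ∑ i, (M *ᵥ v) i ^ 2 ≤ (∑ i, ∑ j, M i j ^ 2) * ∑ j, v j ^ 2 := by
  rw [sum_mul]
  exact sum_le_sum fun i _ => by
    simpa [mulVec, dotProduct] using sum_mul_sq_le_sq_mul_sq univ (M i) v

-- Any nonzero vector of `W` bounds `c` by the Frobenius norm of `M`.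
theorem bddAbove_kthSingularValue_set {k : ℕ} (hk : 0 < k) :
    BddAbove {c : ℝ | 0 ≤ c ∧ ∃ W : Submodule ℝ (Fin m → ℝ), Module.finrank ℝ W = k ∧
      ∀ v ∈ W, c * Real.sqrt (∑ j, v j ^ 2) ≤ Real.sqrt (∑ i, (M *ᵥ v) i ^ 2)} := by
  refine ⟨Real.sqrt (∑ i, ∑ j, M i j ^ 2), ?_⟩
  rintro c ⟨-, W, hW, hcW⟩
  have hW_ne_bot : W ≠ ⊥ := by
    rintro rfl
    rw [finrank_bot] at hW
    omega
  obtain ⟨v, hvW, hv⟩ := Submodule.exists_mem_ne_zero_of_ne_bot hW_ne_bot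
  have hv_pos : 0 < Real.sqrt (∑ j, v j ^ 2) :=
    Real.sqrt_pos.2 <| (sum_nonneg fun j _ => sq_nonneg (v j)).lt_of_ne'
      (sum_sq_eq_zero_iff.not.2 hv)
  refine le_of_mul_le_mul_right ((hcW v hvW).trans ?_) hv_pos
  rw [← Real.sqrt_mul (by positivity)]
  exact Real.sqrt_le_sqrt (sum_mulVec_sq_le_frobenius_mul M v)

theorem sqrt_le_kthSingularValue {k : ℕ} (hk : 0 < k) {a : ℝ} (ha : 0 ≤ a)
    (W : Submodule ℝ (Fin m → ℝ)) (hW : Module.finrank ℝ W = k)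
    (haW : ∀ v ∈ W, a * ∑ j, v j ^ 2 ≤ ∑ i, (M *ᵥ v) i ^ 2) :
    Real.sqrt a ≤ kthSingularValue M k := by
  refine le_csSup (bddAbove_kthSingularValue_set M hk) ⟨Real.sqrt_nonneg a, W, hW, fun v hv => ?_⟩
  rw [← Real.sqrt_mul ha]
  exact Real.sqrt_le_sqrt (haW v hv)

end KthSingularValue

section ClassificationMatrix

variable {ι κ : Type*} [Fintype κ] [DecidableEq κ] {ℓ : ι → κ} {Z : Matrix ι κ ℝ}

theorem sum_comp_eq_sum_card_fiber_mul [Fintype ι] (ℓ : ι → κ) (f : κ → ℝ) :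
    ∑ i, f (ℓ i) = ∑ k, (#{i | ℓ i = k} : ℝ) * f k := by
  rw [← sum_fiberwise univ ℓ]
  refine sum_congr rfl fun k _ => ?_
  rw [sum_congr rfl fun i hi => by rw [(mem_filter.1 hi).2], sum_const, nsmul_eq_mul]

theorem mulVec_eq_comp_of_classification (hZ : ∀ i k, Z i k = if ℓ i = k then 1 else 0)
    (v : κ → ℝ) : Z *ᵥ v = v ∘ ℓ := by
  ext i
  simp [mulVec, dotProduct, hZ]

theorem sum_mulVec_sq_of_classification [Fintype ι]
    (hZ : ∀ i k, Z i k = if ℓ i = k then 1 else 0) (v : κ → ℝ) :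
    ∑ i, (Z *ᵥ v) i ^ 2 = ∑ k, (#{i | ℓ i = k} : ℝ) * v k ^ 2 := by
  simp only [mulVec_eq_comp_of_classification hZ, Function.comp_apply]
  exact sum_comp_eq_sum_card_fiber_mul ℓ (v · ^ 2)

theorem transpose_mul_self_of_classification [Fintype ι]
    (hZ : ∀ i k, Z i k = if ℓ i = k then 1 else 0) :
    Zᵀ * Z = diagonal fun k => (#{i | ℓ i = k} : ℝ) := by
  ext k k'
  simp only [mul_apply, transpose_apply, hZ]
  rw [sum_comp_eq_sum_card_fiber_mul ℓ fun j => (if j = k then 1 else 0) * if j = k' then 1 else 0]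
  by_cases h : k = k' <;> simp [h, Ne.symm]

end ClassificationMatrix

section LowerBoundedMatrix

variable {κ J : Type*} [Fintype κ] [Fintype J] {A : Matrix J κ ℝ} {μ : ℝ}

theorem mul_sum_weighted_sq_le_of_lowerBound (hμ : 0 ≤ μ)
    (hA : ∀ w : κ → ℝ, μ * ∑ k, w k ^ 2 ≤ ∑ j, (A *ᵥ w) j ^ 2)
    {m : ℝ} {d : κ → ℝ} (hm : 0 ≤ m) (hmd : ∀ k, m ≤ d k) (v : κ → ℝ) :
    m * μ * ∑ k, d k * v k ^ 2 ≤ ∑ j, (A *ᵥ fun k => d k * v k) j ^ 2 :=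
  calc m * μ * ∑ k, d k * v k ^ 2 = μ * ∑ k, m * (d k * v k ^ 2) := by
        rw [mul_comm m, mul_assoc, mul_sum]
    _ ≤ μ * ∑ k, (d k * v k) ^ 2 := by
        gcongr with k
        rw [mul_pow, sq (d k), mul_assoc]
        exact mul_le_mul_of_nonneg_right (hmd k) (mul_nonneg (hm.trans (hmd k)) (sq_nonneg _))
    _ ≤ _ := hA _

-- `‖A w‖² = ⟪Aᵀ A w, w⟫ ≤ ‖Aᵀ A w‖ ‖w‖`, and `μ ‖w‖² ≤ ‖A w‖²` then trades `‖w‖` for `‖A w‖`.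
theorem mul_sum_sq_le_sum_transpose_mulVec_sq (hμ : 0 ≤ μ)
    (hA : ∀ w : κ → ℝ, μ * ∑ k, w k ^ 2 ≤ ∑ j, (A *ᵥ w) j ^ 2) (w : κ → ℝ) :
    μ * ∑ j, (A *ᵥ w) j ^ 2 ≤ ∑ k, (Aᵀ *ᵥ (A *ᵥ w)) k ^ 2 := by
  set v := A *ᵥ w
  have hdot : ∑ k, (Aᵀ *ᵥ v) k * w k = ∑ j, v j ^ 2 := by
    have : (Aᵀ *ᵥ v) ⬝ᵥ w = v ⬝ᵥ v := by rw [mulVec_transpose, ← dotProduct_mulVec]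
    simpa [dotProduct, sq] using this
  have hCS := sum_mul_sq_le_sq_mul_sq univ (Aᵀ *ᵥ v) w
  rw [hdot] at hCS
  rcases (sum_nonneg fun j _ => sq_nonneg (v j)).eq_or_lt with hv | hv
  · rw [← hv, mul_zero]
    positivity
  refine le_of_mul_le_mul_right ?_ hv
  calc (μ * ∑ j, v j ^ 2) * ∑ j, v j ^ 2 = μ * (∑ j, v j ^ 2) ^ 2 := by ring
    _ ≤ μ * ((∑ k, (Aᵀ *ᵥ v) k ^ 2) * ∑ k, w k ^ 2) := mul_le_mul_of_nonneg_left hCS hμ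
    _ = (∑ k, (Aᵀ *ᵥ v) k ^ 2) * (μ * ∑ k, w k ^ 2) := by ring
    _ ≤ (∑ k, (Aᵀ *ᵥ v) k ^ 2) * ∑ j, v j ^ 2 := mul_le_mul_of_nonneg_left (hA w) (by positivity)

theorem finrank_range_mulVecLin_of_lowerBound (hμ : 0 < μ)
    (hA : ∀ w : κ → ℝ, μ * ∑ k, w k ^ 2 ≤ ∑ j, (A *ᵥ w) j ^ 2) :
    Module.finrank ℝ (LinearMap.range A.mulVecLin) = Fintype.card κ := by
  refine (LinearMap.finrank_range_of_inj ?_).trans (Module.finrank_fintype_fun_eq_card ℝ)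
  rw [← LinearMap.ker_eq_bot, LinearMap.ker_eq_bot']
  intro w hw
  rw [mulVecLin_apply] at hw
  have hAw : μ * ∑ k, w k ^ 2 ≤ 0 := by simpa [hw] using hA w
  exact sum_sq_eq_zero_iff.1 <|
    (nonpos_of_mul_nonpos_right hAw hμ).antisymm (sum_nonneg fun k _ => sq_nonneg (w k))

end LowerBoundedMatrix

theorem sigmaK_ZAt_lower_bound_general {N K J : ℕ} (hK : 0 < K)
    (ℓ : Fin N → Fin K)
    (Z : Matrix (Fin N) (Fin K) ℝ)
    (hZ : ∀ i k, Z i k = if ℓ i = k then 1 else 0)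
    (Nk : Fin K → ℕ)
    (hNk : ∀ k, Nk k = (Finset.univ.filter fun i => ℓ i = k).card)
    (Nmin : ℕ) (hle : ∀ k, Nmin ≤ Nk k)
    (μ : ℝ) (hμ : 0 ≤ μ)
    (A : Matrix (Fin J) (Fin K) ℝ)
    (hA : ∀ w : Fin K → ℝ, μ * ∑ k, w k ^ 2 ≤ ∑ j, (A.mulVec w) j ^ 2) :
    (∀ v : Fin K → ℝ,
        (Nmin : ℝ) * μ * ∑ i, (Z.mulVec v) i ^ 2 ≤
          ∑ j, ((A * (Zᵀ * Z)).mulVec v) j ^ 2)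
    ∧ Real.sqrt ((Nmin : ℝ) * μ) ≤ kthSingularValue (Z * Aᵀ) K := by
  have hZsq (x : Fin K → ℝ) : ∑ i, (Z *ᵥ x) i ^ 2 = ∑ k, (Nk k : ℝ) * x k ^ 2 := by
    simp only [sum_mulVec_sq_of_classification hZ, hNk]
  have hZtZ : Zᵀ * Z = diagonal fun k => (Nk k : ℝ) := by
    simp only [transpose_mul_self_of_classification hZ, hNk]
  have hmin (k : Fin K) : (Nmin : ℝ) ≤ Nk k := by exact_mod_cast hle k
  refine ⟨fun v => ?_, ?_⟩
  · rw [hZsq, ← mulVec_mulVec, hZtZ, funext (mulVec_diagonal _ v)]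
    exact mul_sum_weighted_sq_le_of_lowerBound hμ hA (Nat.cast_nonneg Nmin) hmin v
  rcases hμ.eq_or_lt with rfl | hμ_pos
  · simpa using kthSingularValue_nonneg (Z * Aᵀ) K
  refine sqrt_le_kthSingularValue _ hK (by positivity) _
    (by simpa using finrank_range_mulVecLin_of_lowerBound hμ_pos hA) ?_
  rintro _ ⟨w, rfl⟩
  rw [mulVecLin_apply, ← mulVec_mulVec, hZsq, mul_assoc]
  calc (Nmin : ℝ) * (μ * ∑ j, (A *ᵥ w) j ^ 2) ≤ Nmin * ∑ k, (Aᵀ *ᵥ (A *ᵥ w)) k ^ 2 :=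
        mul_le_mul_of_nonneg_left (mul_sum_sq_le_sum_transpose_mulVec_sq hμ hA w) (Nat.cast_nonneg _)
    _ ≤ ∑ k, (Nk k : ℝ) * (Aᵀ *ᵥ (A *ᵥ w)) k ^ 2 := by
        rw [mul_sum]
        exact sum_le_sum fun k _ => mul_le_mul_of_nonneg_right (hmin k) (sq_nonneg _)

/-- Equation (Reig) in the proof of Theorem 1: for a classification
matrix `Z` with no empty classes, `μ ≥ 0`, and `A : J×K` with `‖Aw‖² ≥ μ‖w‖²`,
one has `‖A (ZᵀZ) v‖² ≥ N_min μ ‖Zv‖²` for all `v`, and consequently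
`σ_K(Z Aᵀ) ≥ √(N_min μ)`. -/
theorem sigmaK_ZAt_lower_bound {N K J : ℕ} (hK : 0 < K)
    (ℓ : Fin N → Fin K) (hsurj : Function.Surjective ℓ)
    (Z : Matrix (Fin N) (Fin K) ℝ)
    (hZ : ∀ i k, Z i k = if ℓ i = k then 1 else 0)
    (Nk : Fin K → ℕ)
    (hNk : ∀ k, Nk k = (Finset.univ.filter fun i => ℓ i = k).card)
    (Nmin : ℕ) (hle : ∀ k, Nmin ≤ Nk k) (hmem : ∃ k, Nk k = Nmin)
    (μ : ℝ) (hμ : 0 ≤ μ)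
    (A : Matrix (Fin J) (Fin K) ℝ)
    (hA : ∀ w : Fin K → ℝ, μ * ∑ k, w k ^ 2 ≤ ∑ j, (A.mulVec w) j ^ 2) :
    (∀ v : Fin K → ℝ,
        (Nmin : ℝ) * μ * ∑ i, (Z.mulVec v) i ^ 2 ≤
          ∑ j, ((A * (Zᵀ * Z)).mulVec v) j ^ 2)
    ∧ Real.sqrt ((Nmin : ℝ) * μ) ≤ kthSingularValue (Z * Aᵀ) K :=
  sigmaK_ZAt_lower_bound_general hK ℓ Z hZ Nk hNk Nmin hle μ hμ A hA
end
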